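/- In BS(m,ℓ) with m = 2k even, for any integers r, s with r + s = ℓ, the element g = t aᵏ t⁻¹ aʳ t aᵏ t⁻¹ aˢ satisfies scl(g) = 0; in fact, with h = t a⁻ᵏ t⁻¹ one has g·h·g·h⁻¹ = a^{4ℓ}. -/

import Mathlib

open scoped ENNReal commutatorElement

/-- `g` is a product of `n` commutators. -/
def IsProdCommutators {G : Type*} [Group G] (g : G) (n : ℕ) : Prop :=
  ∃ a b : Fin n → G, g = (List.ofFn (fun i => ⁅a i, b i⁆)).prod

/-- Commutator length, valued in `ℝ≥0∞` (`∞` if `g` is not a product of commutators). -/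
noncomputable def cl {G : Type*} [Group G] (g : G) : ℝ≥0∞ :=
  sInf ((fun n : ℕ => (n : ℝ≥0∞)) '' {n | IsProdCommutators g n})

/-- Stable commutator length: the limit (= infimum, by subadditivity) of `cl(gⁿ)/n`. -/
noncomputable def scl {G : Type*} [Group G] (g : G) : ℝ≥0∞ :=
  ⨅ n : ℕ+, cl (g ^ (n : ℕ)) / (n : ℕ+)

/-- The defining relation of the Baumslag–Solitar group `BS(m,ℓ)`:
`t aᵐ t⁻¹ aˡ⁻¹`, with `t = FreeGroup.of 0` and `a = FreeGroup.of 1`. -/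
def bsRels (m l : ℤ) : Set (FreeGroup (Fin 2)) :=
  {FreeGroup.of 0 * (FreeGroup.of 1) ^ m * (FreeGroup.of 0)⁻¹ * ((FreeGroup.of 1) ^ l)⁻¹}

/-- The Baumslag–Solitar group `BS(m,ℓ) = ⟨a, t ∣ t aᵐ t⁻¹ = aˡ⟩`. -/
def BS (m l : ℤ) : Type := PresentedGroup (bsRels m l)

instance (m l : ℤ) : Group (BS m l) := by unfold BS; infer_instance

/-- The stable letter `t` of `BS(m,ℓ)`. -/
def bst (m l : ℤ) : BS m l := PresentedGroup.of 0

/-- The generator `a` of `BS(m,ℓ)`. -/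
def bsa (m l : ℤ) : BS m l := PresentedGroup.of 1

/-! With `b = t aᵏ t⁻¹` one has `b² = aˡ`, so `g = b aʳ b aˢ` and `h = b⁻¹` satisfy
`g h g h⁻¹ = z` with `z = a^{4ℓ} = b⁸` central in `⟨a, b⟩`; hence `g^{2n} = zⁿ ⁅gⁿ, h⁆`.
Conjugating by `t` gives `a^{(2k-ℓ)N} = ⁅t⁻¹, a^{ℓN}⁆`, so `z^{|2k-ℓ| n}` is a single
commutator, `cl (g^{2|2k-ℓ|n}) ≤ 2`, and `scl g ≤ 2 / (2|2k-ℓ|n) → 0`. -/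

open Filter Topology

section

variable {G : Type*} [Group G]

theorem commutator_inv_zpow_of_conj_zpow_eq {t a : G} {m l : ℤ} (h : t * a ^ m * t⁻¹ = a ^ l)
    (n : ℤ) : ⁅t⁻¹, a ^ (l * n)⁆ = a ^ ((m - l) * n) := by
  have hconj : t⁻¹ * a ^ (l * n) * t = a ^ (m * n) := by
    rw [zpow_mul, zpow_mul, ← h, conj_zpow]
    group
  rw [commutatorElement_def, inv_inv, hconj, sub_mul, zpow_sub]

theorem exists_commutator_eq_zpow_natAbs_mul {t a : G} {m l : ℤ} (h : t * a ^ m * t⁻¹ = a ^ l)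
    (n : ℤ) : ∃ x y : G, a ^ ((m - l).natAbs * n) = ⁅x, y⁆ :=
  ⟨t⁻¹, a ^ (l * ((m - l).sign * n)), by
    rw [commutator_inv_zpow_of_conj_zpow_eq h, ← mul_assoc, Int.mul_sign_self]⟩

theorem pow_two_mul_eq_mul_commutator {g h z : G} (hz : g * h * g * h⁻¹ = z)
    (hzg : Commute z g) (n : ℕ) : g ^ (2 * n) = z ^ n * ⁅g ^ n, h⁆ := by
  have hconj : h * g * h⁻¹ = g⁻¹ * z := by rw [← hz]; group
  have hconj_pow : h * g ^ n * h⁻¹ = (g ^ n)⁻¹ * z ^ n := by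
    rw [← conj_pow, hconj, (hzg.symm.inv_left).mul_pow, inv_pow]
  have hcomm : ⁅g ^ n, h⁆ = g ^ n * (z ^ n)⁻¹ * g ^ n := by
    rw [commutatorElement_def, show g ^ n * h * (g ^ n)⁻¹ * h⁻¹ = g ^ n * (h * g ^ n * h⁻¹)⁻¹ by
      group, hconj_pow]
    group
  rw [hcomm, ← mul_assoc, ← mul_assoc, (hzg.pow_pow n n).eq, two_mul, pow_add]
  group

theorem commute_zpow_mul_zpow_mul_of_sq_eq_zpow {a b : G} {l : ℤ} (hb : b ^ 2 = a ^ l)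
    (r s : ℤ) : Commute (a ^ l) (b * a ^ r * b * a ^ s) := by
  have hab : Commute (a ^ l) b := hb ▸ (Commute.refl b).pow_left 2
  have har : ∀ j : ℤ, Commute (a ^ l) (a ^ j) := fun j => (Commute.refl a).zpow_zpow l j
  exact ((hab.mul_right (har r)).mul_right hab).mul_right (har s)

theorem mul_inv_mul_eq_zpow_four_mul_of_sq_eq_zpow {a b : G} {l : ℤ} (hb : b ^ 2 = a ^ l)
    {r s : ℤ} (hrs : r + s = l) :
    (b * a ^ r * b * a ^ s) * b⁻¹ * (b * a ^ r * b * a ^ s) * b = a ^ (4 * l) := by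
  have hs : a ^ s = b ^ 2 * (a ^ r)⁻¹ := by
    rw [hb, ← zpow_neg, ← zpow_add, ← hrs, add_neg_cancel_comm]
  have hcomm : Commute (a ^ r) (b ^ 6) := by
    rw [show b ^ 6 = (b ^ 2) ^ 3 by group, hb]
    exact ((Commute.refl a).zpow_zpow r l).pow_right 3
  calc (b * a ^ r * b * a ^ s) * b⁻¹ * (b * a ^ r * b * a ^ s) * b
      = b * (a ^ r * b ^ 6) * (a ^ r)⁻¹ * b := by rw [hs]; group
    _ = (b ^ 2) ^ 4 := by rw [hcomm.eq]; group
    _ = a ^ (4 * l) := by rw [hb, ← zpow_natCast, ← zpow_mul, mul_comm]; rfl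

theorem cl_le_of_isProdCommutators {g : G} {n : ℕ} (h : IsProdCommutators g n) : cl g ≤ n :=
  sInf_le ⟨n, h, rfl⟩

theorem isProdCommutators_commutator_mul_commutator (x y u v : G) :
    IsProdCommutators (⁅x, y⁆ * ⁅u, v⁆) 2 :=
  ⟨![x, u], ![y, v], by simp [List.ofFn_succ]⟩

theorem scl_le_cl_pow_div (g : G) (n : ℕ+) : scl g ≤ cl (g ^ (n : ℕ)) / n :=
  iInf_le (fun n : ℕ+ => cl (g ^ (n : ℕ)) / n) n

theorem scl_eq_zero_of_cl_pow_mul_le {g : G} {p C : ℕ} (hp : 0 < p)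
    (h : ∀ m : ℕ+, cl (g ^ (p * m)) ≤ C) : scl g = 0 := by
  have hle : ∀ m : ℕ+, scl g ≤ C * (m : ℝ≥0∞)⁻¹ := by
    intro m
    calc scl g ≤ cl (g ^ (p * m)) / (p * m : ℕ) := scl_le_cl_pow_div g ⟨p * m, by positivity⟩
      _ ≤ C / (m : ℕ) := by
        gcongr
        · exact h m
        · exact_mod_cast Nat.le_mul_of_pos_left _ hp
      _ = C * (m : ℝ≥0∞)⁻¹ := div_eq_mul_inv _ _
  have hlim : Tendsto (fun m : ℕ => (C : ℝ≥0∞) * (m : ℝ≥0∞)⁻¹) atTop (𝓝 0) := by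
    simpa using ENNReal.Tendsto.const_mul ENNReal.tendsto_inv_nat_nhds_zero (Or.inr (by simp))
  exact nonpos_iff_eq_zero.mp <|
    ge_of_tendsto hlim (eventually_atTop.2 ⟨1, fun m hm => hle ⟨m, hm⟩⟩)

theorem scl_eq_zero_of_mul_conj_mul_eq {g h z : G} (hz : g * h * g * h⁻¹ = z) (hzg : Commute z g)
    {p : ℕ} (hp : 0 < p) (hcomm : ∀ n : ℕ, ∃ x y : G, z ^ (p * n) = ⁅x, y⁆) : scl g = 0 := by
  refine scl_eq_zero_of_cl_pow_mul_le (p := 2 * p) (C := 2) (by positivity) fun n => ?_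
  obtain ⟨x, y, hxy⟩ := hcomm n
  rw [mul_assoc, pow_two_mul_eq_mul_commutator hz hzg, hxy]
  exact_mod_cast cl_le_of_isProdCommutators (isProdCommutators_commutator_mul_commutator _ _ _ _)

end

theorem bs_rel (m l : ℤ) : bst m l * bsa m l ^ m * (bst m l)⁻¹ = bsa m l ^ l := by
  have h := PresentedGroup.mk_eq_mk_of_mul_inv_mem (rels := bsRels m l) rfl
  simp only [map_mul, map_zpow, map_inv] at h
  exact h

/-- In `BS(m,ℓ)` with `m = 2k` even and `r + s = ℓ`, the element
`g = t aᵏ t⁻¹ aʳ t aᵏ t⁻¹ aˢ` satisfies `g h g h⁻¹ = a^{4ℓ}` for `h = t a⁻ᵏ t⁻¹`,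
and `scl(g) = 0`. -/
theorem bs_even_scl_zero (k l r s : ℤ) (hml : 2 * k ≠ l) (hrs : r + s = l) :
    (bst (2*k) l * (bsa (2*k) l) ^ k * (bst (2*k) l)⁻¹ * (bsa (2*k) l) ^ r *
        (bst (2*k) l * (bsa (2*k) l) ^ k * (bst (2*k) l)⁻¹) * (bsa (2*k) l) ^ s) *
      (bst (2*k) l * (bsa (2*k) l) ^ (-k) * (bst (2*k) l)⁻¹) *
      (bst (2*k) l * (bsa (2*k) l) ^ k * (bst (2*k) l)⁻¹ * (bsa (2*k) l) ^ r *
        (bst (2*k) l * (bsa (2*k) l) ^ k * (bst (2*k) l)⁻¹) * (bsa (2*k) l) ^ s) *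
      (bst (2*k) l * (bsa (2*k) l) ^ (-k) * (bst (2*k) l)⁻¹)⁻¹ = (bsa (2*k) l) ^ (4 * l) ∧
    scl (bst (2*k) l * (bsa (2*k) l) ^ k * (bst (2*k) l)⁻¹ * (bsa (2*k) l) ^ r *
        (bst (2*k) l * (bsa (2*k) l) ^ k * (bst (2*k) l)⁻¹) * (bsa (2*k) l) ^ s) = 0 := by
  set t := bst (2*k) l
  set a := bsa (2*k) l
  set b := t * a ^ k * t⁻¹ with hb_def
  have hrel : t * a ^ (2*k) * t⁻¹ = a ^ l := bs_rel (2*k) l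
  have hb : b ^ 2 = a ^ l := by rw [← hrel, hb_def, conj_pow, pow_two, ← zpow_add, ← two_mul]
  have hinv : t * a ^ (-k) * t⁻¹ = b⁻¹ := by rw [hb_def]; group
  have hid := mul_inv_mul_eq_zpow_four_mul_of_sq_eq_zpow hb hrs
  have hcomm : Commute (a ^ (4 * l)) (b * a ^ r * b * a ^ s) := by
    rw [mul_comm 4 l, zpow_mul]
    exact (commute_zpow_mul_zpow_mul_of_sq_eq_zpow hb r s).zpow_left 4
  refine ⟨by rwa [hinv, inv_inv], ?_⟩
  refine scl_eq_zero_of_mul_conj_mul_eq (by rwa [inv_inv]) hcomm (p := (2*k - l).natAbs)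
    (by omega) fun n => ?_
  obtain ⟨x, y, hxy⟩ := exists_commutator_eq_zpow_natAbs_mul hrel (4 * l * n)
  refine ⟨x, y, ?_⟩
  rw [← hxy, ← zpow_natCast, ← zpow_mul]
  congr 1
  push_cast
  ring
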